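/- Let (A[[t]],ν_t,d_t) and (A[[t]],ν'_t,d'_t) be two equivalent linear deformations of the modified λ-differential 3-Lie algebra (A,[-,-,-],d), with equivalence given by N_t = id_A + tN for a linear map N : A → A satisfying N_t(d_t(a)) = d'_t(N_t(a)) and N_t(ν_t(a1,a2,a3)) = ν'_t(N_t(a1),N_t(a2),N_t(a3)) for all a,a1,a2,a3 ∈ A. Then the infinitesimals differ by a coboundary: ν1(a1,a2,a3) - ν'1(a1,a2,a3) = [N(a1),a2,a3] + [a1,N(a2),a3] + [a1,a2,N(a3)] - N([a1,a2,a3]) for all a1,a2,a3 ∈ A, and d1(a) - d'1(a) = d(N(a)) - N(d(a)) for all a ∈ A; hence (ν1,d1) and (ν'1,d'1) lie in the same cohomology class. -/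

import Mathlib

open Finset

section Prelude

variable (k : Type*) {A W M : Type*} [Field k] [CharZero k]
  [AddCommGroup A] [Module k A] [AddCommGroup W] [Module k W]
  [AddCommGroup M] [Module k M]

/-- A trilinear, totally skew-symmetric map `A × A × A → W`. -/
def IsTriSkew (f : A → A → A → W) : Prop :=
  (∀ (t : k) (a a' b c : A), f (t • a + a') b c = t • f a b c + f a' b c) ∧
  (∀ (t : k) (a b b' c : A), f a (t • b + b') c = t • f a b c + f a b' c) ∧
  (∀ (t : k) (a b c c' : A), f a b (t • c + c') = t • f a b c + f a b c') ∧
  (∀ a b c : A, f a b c = - f b a c) ∧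
  (∀ a b c : A, f a b c = - f a c b)

/-- `br` makes `A` a 3-Lie algebra: it is trilinear, totally skew-symmetric and
satisfies the Filippov identity. -/
def Is3LieBr (br : A → A → A → A) : Prop :=
  IsTriSkew k br ∧
  ∀ a1 a2 a3 a4 a5 : A, br a1 a2 (br a3 a4 a5) =
    br (br a1 a2 a3) a4 a5 + br a3 (br a1 a2 a4) a5 + br a3 a4 (br a1 a2 a5)

/-- `d` is a modified `lam`-differential operator on `(A, br)`. -/
def IsMDiffOn (br : A → A → A → A) (lam : k) (d : A → A) : Prop :=
  ∀ a b c : A, d (br a b c) =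
    br (d a) b c + br a (d b) c + br a b (d c) + lam • br a b c

/-- `ρ` is a representation of the 3-Lie algebra `(A, br)` on `M`. -/
def Is3LieRep (br : A → A → A → A) (ρ : A → A → M →ₗ[k] M) : Prop :=
  (∀ (t : k) (a a' b : A), ρ (t • a + a') b = t • ρ a b + ρ a' b) ∧
  (∀ (t : k) (a b b' : A), ρ a (t • b + b') = t • ρ a b + ρ a b') ∧
  (∀ a b : A, ρ a b = - ρ b a) ∧
  (∀ a1 a2 a3 a4 : A, ρ (br a1 a2 a3) a4 =
    ρ a2 a3 ∘ₗ ρ a1 a4 + ρ a3 a1 ∘ₗ ρ a2 a4 + ρ a1 a2 ∘ₗ ρ a3 a4) ∧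
  (∀ a1 a2 a3 a4 : A, ρ a1 a2 ∘ₗ ρ a3 a4 =
    ρ a3 a4 ∘ₗ ρ a1 a2 + ρ (br a1 a2 a3) a4 + ρ a3 (br a1 a2 a4))

/-- Compatibility of `dM` making `(M, ρ, dM)` a representation of the modified
`lam`-differential 3-Lie algebra `(A, br, d)`. -/
def IsMDiffRep (ρ : A → A → M →ₗ[k] M) (lam : k) (d : A → A) (dM : M → M) : Prop :=
  ∀ (a b : A) (v : M), dM (ρ a b v) =
    ρ (d a) b v + ρ a (d b) v + ρ a b (dM v) + lam • ρ a b v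

end Prelude

section DeformDefs

variable {A : Type*} [AddCommGroup A]

/-- The family of coefficients `ν₀ = br, ν₁, ν₂, νₛ = 0 (s > 2)` of `ν_t`. -/
def nuCoef (br nu1 nu2 : A → A → A → A) : ℕ → A → A → A → A := fun s =>
  if s = 0 then br else if s = 1 then nu1 else if s = 2 then nu2
    else fun _ _ _ => 0

/-- The family of coefficients `d₀ = d, d₁, dₗ = 0 (l > 1)` of `d_t`. -/
def dCoef (d d1 : A → A) : ℕ → A → A := fun l =>
  if l = 0 then d else if l = 1 then d1 else fun _ => 0

/-- The `t`-linear extension `ν_t = ν₀ + t ν₁ + t² ν₂` to `A[[t]]`, where an element of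
`A[[t]]` is encoded as its sequence of coefficients `ℕ → A`. -/
def nuT (br nu1 nu2 : A → A → A → A) :
    (ℕ → A) → (ℕ → A) → (ℕ → A) → (ℕ → A) := fun x y z n =>
  ∑ p ∈ Finset.Nat.antidiagonalTuple 4 n,
    nuCoef br nu1 nu2 (p 3) (x (p 0)) (y (p 1)) (z (p 2))

/-- The `t`-linear extension `d_t = d + t d₁` to `A[[t]]`. -/
def dT (d d1 : A → A) : (ℕ → A) → (ℕ → A) := fun x n =>
  ∑ p ∈ Finset.HasAntidiagonal.antidiagonal n, dCoef d d1 p.2 (x p.1)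

/-- The inclusion `A → A[[t]]` as constant power series. -/
def constT (a : A) : ℕ → A := fun n => if n = 0 then a else 0

end DeformDefs

section DeformProp

variable (k : Type*) {A : Type*} [Field k] [AddCommGroup A] [Module k A]

/-- `(ν_t, d_t)` endows `A[[t]]` with a modified `λ`-differential 3-Lie algebra
structure: `ν_t` satisfies the Filippov identity and `d_t` the modified
`λ`-differential identity. -/
def IsLinearDeformation (br nu1 nu2 : A → A → A → A) (lam : k) (d d1 : A → A) :
    Prop :=
  (∀ x y z w u : ℕ → A,
    nuT br nu1 nu2 x y (nuT br nu1 nu2 z w u) =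
      nuT br nu1 nu2 (nuT br nu1 nu2 x y z) w u +
        nuT br nu1 nu2 z (nuT br nu1 nu2 x y w) u +
          nuT br nu1 nu2 z w (nuT br nu1 nu2 x y u)) ∧
  (∀ x y z : ℕ → A,
    dT d d1 (nuT br nu1 nu2 x y z) =
      nuT br nu1 nu2 (dT d d1 x) y z + nuT br nu1 nu2 x (dT d d1 y) z +
        nuT br nu1 nu2 x y (dT d d1 z) + lam • nuT br nu1 nu2 x y z)

end DeformProp

section NtDefs

variable {A : Type*} [AddCommGroup A]

/-- The coefficients `N₀ = id, N₁ = N, Nₗ = 0 (l > 1)` of `N_t = id + tN`. -/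
def nCoef (N : A → A) : ℕ → A → A := fun l =>
  if l = 0 then id else if l = 1 then N else fun _ => 0

/-- The `t`-linear extension of `N_t = id + tN` to `A[[t]]`. -/
def nT (N : A → A) : (ℕ → A) → (ℕ → A) := fun x n =>
  ∑ p ∈ Finset.HasAntidiagonal.antidiagonal n, nCoef N p.2 (x p.1)

end NtDefs

/-!
Both equivalence identities are equalities of power series in `t`; evaluated at constant
series, their coefficients of `t⁰` agree trivially and their coefficients of `t¹` are exactly
the two claimed identities, because `N_t`, `d_t` and `ν_t` have constant terms `id`, `d` and
`[-,-,-]`, and `[-,-,-]` vanishes when one argument is `0`.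
-/

section TriSkew

variable {k A W : Type*} [Field k] [AddCommGroup A] [Module k A] [AddCommGroup W] [Module k W]
  {f : A → A → A → W}

theorem IsTriSkew.zero_left (hf : IsTriSkew k f) (b c : A) : f 0 b c = 0 := by
  simpa using hf.1 1 0 0 b c

theorem IsTriSkew.zero_mid (hf : IsTriSkew k f) (a c : A) : f a 0 c = 0 := by
  simpa using hf.2.1 1 a 0 0 c

theorem IsTriSkew.zero_right (hf : IsTriSkew k f) (a b : A) : f a b 0 = 0 := by
  simpa using hf.2.2.1 1 a b 0 0

end TriSkew

section Coefficients

variable {A : Type*} [AddCommGroup A]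

@[simp]
theorem constT_zero (a : A) : constT a 0 = a := rfl

@[simp]
theorem constT_one (a : A) : constT a 1 = 0 := rfl

@[simp]
theorem nT_apply_zero (N : A → A) (x : ℕ → A) : nT N x 0 = x 0 := by
  simp [nT, nCoef]

@[simp]
theorem nT_apply_one (N : A → A) (x : ℕ → A) : nT N x 1 = N (x 0) + x 1 := by
  simp [nT, Finset.Nat.sum_antidiagonal_succ, nCoef]

@[simp]
theorem dT_apply_zero (d d1 : A → A) (x : ℕ → A) : dT d d1 x 0 = d (x 0) := by
  simp [dT, dCoef]

@[simp]
theorem dT_apply_one (d d1 : A → A) (x : ℕ → A) : dT d d1 x 1 = d1 (x 0) + d (x 1) := by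
  simp [dT, Finset.Nat.sum_antidiagonal_succ, dCoef]

@[simp]
theorem nuT_apply_zero (br nu1 nu2 : A → A → A → A) (x y z : ℕ → A) :
    nuT br nu1 nu2 x y z 0 = br (x 0) (y 0) (z 0) := by
  simp [nuT, Finset.Nat.antidiagonalTuple_zero_right, nuCoef]

theorem nuT_apply_one (br nu1 nu2 : A → A → A → A) (x y z : ℕ → A) :
    nuT br nu1 nu2 x y z 1 =
      br (x 1) (y 0) (z 0) + br (x 0) (y 1) (z 0) + br (x 0) (y 0) (z 1) +
        nu1 (x 0) (y 0) (z 0) := by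
  have htuples : Finset.Nat.antidiagonalTuple 4 1 =
      insert ![1, 0, 0, 0] (insert ![0, 1, 0, 0] (insert ![0, 0, 1, 0] {![0, 0, 0, 1]})) := by
    decide
  rw [nuT, htuples, Finset.sum_insert (by decide), Finset.sum_insert (by decide),
    Finset.sum_insert (by decide), Finset.sum_singleton]
  simp [nuCoef, add_assoc]

end Coefficients

section FirstOrder

variable {k A : Type*} [Field k] [AddCommGroup A] [Module k A]

theorem nT_nuT_constT_apply_one {br : A → A → A → A} (hbr : IsTriSkew k br)
    (nu1 nu2 : A → A → A → A) (N : A → A) (a1 a2 a3 : A) :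
    nT N (nuT br nu1 nu2 (constT a1) (constT a2) (constT a3)) 1 =
      N (br a1 a2 a3) + nu1 a1 a2 a3 := by
  simp [nuT_apply_one, hbr.zero_left, hbr.zero_mid, hbr.zero_right]

theorem nuT_nT_constT_apply_one (br nu1 nu2 : A → A → A → A) (N : A → A) (a1 a2 a3 : A) :
    nuT br nu1 nu2 (nT N (constT a1)) (nT N (constT a2)) (nT N (constT a3)) 1 =
      br (N a1) a2 a3 + br a1 (N a2) a3 + br a1 a2 (N a3) + nu1 a1 a2 a3 := by
  simp [nuT_apply_one]

theorem nT_dT_constT_apply_one (d d1 : A →ₗ[k] A) (N : A → A) (a : A) :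
    nT N (dT d d1 (constT a)) 1 = N (d a) + d1 a := by
  simp

theorem dT_nT_constT_apply_one (d d1 : A →ₗ[k] A) (N : A → A) (a : A) :
    dT d d1 (nT N (constT a)) 1 = d1 a + d (N a) := by
  simp

end FirstOrder

theorem stmt11_general {k A : Type*} [Field k] [AddCommGroup A] [Module k A]
    (br : A → A → A → A) (d : A →ₗ[k] A)
    (h3 : Is3LieBr k br)
    (nu1 nu2 nu1' nu2' : A → A → A → A)
    (d1 d1' : A →ₗ[k] A)
    (N : A →ₗ[k] A)
    (heqd : ∀ a : A, nT ⇑N (dT ⇑d ⇑d1 (constT a)) = dT ⇑d ⇑d1' (nT ⇑N (constT a)))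
    (heqnu : ∀ a1 a2 a3 : A,
      nT ⇑N (nuT br nu1 nu2 (constT a1) (constT a2) (constT a3)) =
        nuT br nu1' nu2' (nT ⇑N (constT a1)) (nT ⇑N (constT a2))
          (nT ⇑N (constT a3))) :
    (∀ a1 a2 a3 : A,
      nu1 a1 a2 a3 - nu1' a1 a2 a3 =
        br (N a1) a2 a3 + br a1 (N a2) a3 + br a1 a2 (N a3) - N (br a1 a2 a3)) ∧
    (∀ a : A, d1 a - d1' a = d (N a) - N (d a)) := by
  constructor
  · intro a1 a2 a3
    have h := congrFun (heqnu a1 a2 a3) 1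
    rw [nT_nuT_constT_apply_one h3.1, nuT_nT_constT_apply_one] at h
    rw [sub_eq_sub_iff_add_eq_add, add_comm (nu1 a1 a2 a3), h]
  · intro a
    have h := congrFun (heqd a) 1
    rw [nT_dT_constT_apply_one, dT_nT_constT_apply_one] at h
    rw [sub_eq_sub_iff_add_eq_add, add_comm (d1 a), h, add_comm]

/-- if two linear deformations `(ν_t, d_t)` and `(ν'_t, d'_t)` of the
modified `λ`-differential 3-Lie algebra `(A, br, d)` are equivalent via
`N_t = id + tN`, then their infinitesimals differ by a coboundary; explicitly
`ν₁ - ν'₁ = δN` and `d₁ - d'₁ = d ∘ N - N ∘ d`. -/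
theorem stmt11 {k A : Type*} [Field k] [CharZero k] [AddCommGroup A] [Module k A]
    (br : A → A → A → A) (lam : k) (d : A →ₗ[k] A)
    (h3 : Is3LieBr k br) (hd : IsMDiffOn k br lam ⇑d)
    (nu1 nu2 nu1' nu2' : A → A → A → A)
    (hnu1 : IsTriSkew k nu1) (hnu2 : IsTriSkew k nu2)
    (hnu1' : IsTriSkew k nu1') (hnu2' : IsTriSkew k nu2')
    (d1 d1' : A →ₗ[k] A)
    (hdef : IsLinearDeformation k br nu1 nu2 lam ⇑d ⇑d1)
    (hdef' : IsLinearDeformation k br nu1' nu2' lam ⇑d ⇑d1')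
    (N : A →ₗ[k] A)
    (heqd : ∀ a : A, nT ⇑N (dT ⇑d ⇑d1 (constT a)) = dT ⇑d ⇑d1' (nT ⇑N (constT a)))
    (heqnu : ∀ a1 a2 a3 : A,
      nT ⇑N (nuT br nu1 nu2 (constT a1) (constT a2) (constT a3)) =
        nuT br nu1' nu2' (nT ⇑N (constT a1)) (nT ⇑N (constT a2))
          (nT ⇑N (constT a3))) :
    (∀ a1 a2 a3 : A,
      nu1 a1 a2 a3 - nu1' a1 a2 a3 =
        br (N a1) a2 a3 + br a1 (N a2) a3 + br a1 a2 (N a3) - N (br a1 a2 a3)) ∧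
    (∀ a : A, d1 a - d1' a = d (N a) - N (d a)) :=
  stmt11_general br d h3 nu1 nu2 nu1' nu2' d1 d1' N heqd heqnu
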